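/- Every 5/4-power on the alphabet Σ₈ is a pre-5/4-power; that is, if w = x y x with |x y| = 4|x| and x nonempty, then φ(w) is a 5/4-power. Consequently, every pre-5/4-power-free word on Σ₈ is 5/4-power-free. -/
import Mathlib


abbrev Sigma8 := ℤ × Fin 8

def phiAux (n : ℤ) : ℕ → List Sigma8
  | 0 => [(0,0),(1,1),(0,2),(0,3),(1,4),(n+3,5)]
  | 1 => [(1,6),(1,7),(0,0),(0,1),(0,2),(n+2,3)]
  | 2 => [(1,4),(1,5),(1,6),(0,7),(0,0),(n+3,1)]
  | 3 => [(0,2),(1,3),(1,4),(0,5),(1,6),(n+2,7)]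
  | 4 => [(0,0),(1,1),(0,2),(0,3),(1,4),(n+1,5)]
  | 5 => [(1,6),(1,7),(0,0),(0,1),(0,2),(n+2,3)]
  | 6 => [(1,4),(1,5),(1,6),(0,7),(0,0),(n+1,1)]
  | 7 => [(0,2),(1,3),(1,4),(0,5),(1,6),(n+2,7)]
  | _ => []

/-- The 6-uniform morphism φ on Σ₈, on a single letter. -/
def phi (a : Sigma8) : List Sigma8 := phiAux a.1 a.2.val

/-- φ extended to words by concatenation. -/
def phiW (w : List Sigma8) : List Sigma8 := w.flatMap phi

/-- A word on Σ₈ is subscript-increasing if subscripts increase by 1 mod 8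
from each letter to the next. -/
def SubIncr (w : List Sigma8) : Prop :=
  ∀ i : ℕ, (h : i + 1 < w.length) →
    (w.get ⟨i + 1, h⟩).2 = (w.get ⟨i, Nat.lt_of_succ_lt h⟩).2 + 1

/-- A 5/4-power: a word of the form x y x with x nonempty and |y| = 3|x|
(equivalently |xy| = 4|x|). -/
def IsPow54 {α : Type*} (w : List α) : Prop :=
  ∃ x y : List α, x ≠ [] ∧ y.length = 3 * x.length ∧ w = x ++ y ++ x

lemma phi_length (a : Sigma8) : (phi a).length = 6 := by
  obtain ⟨n, j⟩ := a
  fin_cases j <;> rfl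

lemma phiW_length (w : List Sigma8) : (phiW w).length = 6 * w.length := by
  induction w with
  | nil => rfl
  | cons a w ih =>
      simp [phiW, List.flatMap_cons, phi_length a, phiW] at *
      omega

lemma phiW_append (a b : List Sigma8) : phiW (a ++ b) = phiW a ++ phiW b := by
  simp [phiW]

/-- Every 5/4-power on Σ₈ is a pre-5/4-power; consequently every
pre-5/4-power-free word on Σ₈ is 5/4-power-free. -/
theorem stmt5 :
    (∀ x y : List Sigma8, x ≠ [] → (x ++ y).length = 4 * x.length →
      IsPow54 (phiW (x ++ y ++ x))) ∧
    (∀ w : List Sigma8, (∀ u : List Sigma8, u <:+: w → ¬ IsPow54 (phiW u)) →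
      ∀ u : List Sigma8, u <:+: w → ¬ IsPow54 u) := by
  have main : ∀ x y : List Sigma8, x ≠ [] → y.length = 3 * x.length →
      IsPow54 (phiW (x ++ y ++ x)) := by
    intro x y hx hy
    refine ⟨phiW x, phiW y, ?_, ?_, ?_⟩
    · intro h
      have := phiW_length x
      rw [h] at this
      simp at this
      exact hx this
    · rw [phiW_length, phiW_length, hy]; ring
    · rw [phiW_append, phiW_append]
  constructor
  · intro x y hx hlen
    apply main x y hx
    simp [List.length_append] at hlen
    omega
  · intro w hfree u hu ⟨x, y, hx, hy, hxy⟩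
    exact hfree u hu (hxy ▸ main x y hx hy)
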